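/- arXiv:1006.1540 — 3 statements merged into one kernel-verified Lean document; each statement's English description precedes it below -/
import Mathlib

section
/- Let E₁,…,Eₙ be normed spaces over 𝕂, let β_n be a norm on T = E₁⊗⋯⊗Eₙ and β_{n+1} a norm on T⊗𝕂. Then the following are equivalent: (i) the canonical bijection ψ : (T⊗𝕂, β_{n+1}) → (T, β_n) is an isometric isomorphism; (ii) for every normed space F over 𝕂 and every (n+1)-linear map A : E₁×⋯×Eₙ×𝕂 → F, the linearization A_L is bounded with respect to β_{n+1} if and only if the linearization (A1)_L is bounded with respect to β_n, and in that case the two operator norms coincide. (This is the level-wise content of: a tensor norm β is smooth if and only if L_β has property [B].) -/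
/-!
Since `A_L = (A1)_L ∘ ψ` and every linear map on `E₁ ⊗ ⋯ ⊗ Eₙ` is some `(A1)_L`, property [B]
compares, for each linear `f`, the bounding constants of `f ∘ ψ` for `β_{n+1}` with those of `f`
for `β_n`. If `β_n ∘ ψ = β_{n+1}` the two sets of constants coincide. Conversely, by Hahn–Banach
each seminorm is attained by a functional it dominates; feeding such a norming functional of one
side (valued in a copy of `𝕂` in universe `u`) into property [B] shows that it is also dominated by
the other side, so `β_n ∘ ψ` and `β_{n+1}` dominate each other.
-/

open scoped TensorProduct
open PiTensorProduct

universe u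

/-- The linearization `A_L : E₁ ⊗ ⋯ ⊗ Eₙ ⊗ 𝕜 → F` of an `(n+1)`-linear map
`A : E₁ × ⋯ × Eₙ × 𝕜 → F` (encoded in curried form as a multilinear map with values
in `𝕜 →ₗ[𝕜] F`). -/
noncomputable def linearizationFull {𝕜 : Type*} [RCLike 𝕜] {n : ℕ} {E : Fin n → Type*}
    [∀ i, NormedAddCommGroup (E i)] [∀ i, NormedSpace 𝕜 (E i)]
    {F : Type u} [NormedAddCommGroup F] [NormedSpace 𝕜 F]
    (A : MultilinearMap 𝕜 E (𝕜 →ₗ[𝕜] F)) : ((⨂[𝕜] i, E i) ⊗[𝕜] 𝕜) →ₗ[𝕜] F :=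
  TensorProduct.lift (PiTensorProduct.lift A)

/-- The `n`-linear map `A1 : E₁ × ⋯ × Eₙ → F`, `A1(x₁, …, xₙ) = A(x₁, …, xₙ, 1)`. -/
noncomputable def Aone {𝕜 : Type*} [RCLike 𝕜] {n : ℕ} {E : Fin n → Type*}
    [∀ i, NormedAddCommGroup (E i)] [∀ i, NormedSpace 𝕜 (E i)]
    {F : Type u} [NormedAddCommGroup F] [NormedSpace 𝕜 F]
    (A : MultilinearMap 𝕜 E (𝕜 →ₗ[𝕜] F)) : MultilinearMap 𝕜 E F :=
  (LinearMap.applyₗ (1 : 𝕜)).compMultilinearMap A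

namespace LinearMap

variable {𝕜 M N F : Type*} [RCLike 𝕜] [AddCommGroup M] [Module 𝕜 M] [AddCommGroup N]
  [Module 𝕜 N] [SeminormedAddCommGroup F] [Module 𝕜 F]

def opNormBounds (p : Seminorm 𝕜 M) (f : M →ₗ[𝕜] F) : Set ℝ :=
  {C | 0 ≤ C ∧ ∀ x, ‖f x‖ ≤ C * p x}

theorem norm_le_sInf_opNormBounds_mul {p : Seminorm 𝕜 M} {f : M →ₗ[𝕜] F}
    (hf : (opNormBounds p f).Nonempty) (x : M) : ‖f x‖ ≤ sInf (opNormBounds p f) * p x := by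
  obtain ⟨C₀, hC₀⟩ := hf
  rcases (apply_nonneg p x).eq_or_lt with hx | hx
  · simpa [← hx] using hC₀.2 x
  · rw [← div_le_iff₀ hx]
    exact le_csInf ⟨C₀, hC₀⟩ fun C hC => (div_le_iff₀ hx).2 (hC.2 x)

theorem norm_le_of_sInf_opNormBounds_eq {F' : Type*} [SeminormedAddCommGroup F'] [Module 𝕜 F']
    {p : Seminorm 𝕜 M} {q : Seminorm 𝕜 N} {f : M →ₗ[𝕜] F} {g : N →ₗ[𝕜] F'}
    (hf : 1 ∈ opNormBounds p f) (hg : (opNormBounds q g).Nonempty)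
    (heq : sInf (opNormBounds q g) = sInf (opNormBounds p f)) (y : N) : ‖g y‖ ≤ q y :=
  calc ‖g y‖ ≤ sInf (opNormBounds q g) * q y := norm_le_sInf_opNormBounds_mul hg y
    _ ≤ 1 * q y := by
      rw [heq]
      exact mul_le_mul_of_nonneg_right (csInf_le ⟨0, fun _ hC => hC.1⟩ hf) (apply_nonneg q y)
    _ = q y := one_mul _

theorem opNormBounds_comp_of_apply_eq {p : Seminorm 𝕜 M} {q : Seminorm 𝕜 N}
    {ρ : N ≃ₗ[𝕜] M} (h : ∀ z, p (ρ z) = q z) (f : M →ₗ[𝕜] F) :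
    opNormBounds q (f ∘ₗ ρ.toLinearMap) = opNormBounds p f := by
  refine Set.ext fun C => and_congr_right fun _ =>
    ⟨fun hC x => ?_, fun hC z => by simpa [← h] using hC (ρ z)⟩
  simpa [← h] using hC (ρ.symm x)

end LinearMap

theorem Seminorm.exists_dual_vector {𝕜 M : Type*} [RCLike 𝕜] [AddCommGroup M] [Module 𝕜 M]
    (p : Seminorm 𝕜 M) (x : M) : ∃ g : Module.Dual 𝕜 M, (∀ v, ‖g v‖ ≤ p v) ∧ ‖g x‖ = p x := by
  let := p.toAddGroupSeminorm.toSeminormedAddCommGroup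
  let : NormedSpace 𝕜 M := ⟨fun c v => (map_smul_eq_mul p c v).le⟩
  obtain ⟨g, hg, hgx⟩ := exists_dual_vector'' 𝕜 x
  refine ⟨g.toLinearMap, fun v => ?_, ?_⟩
  · exact (by simpa using g.le_of_opNorm_le hg v : ‖g v‖ ≤ ‖v‖)
  · exact (by simp [hgx] : ‖g x‖ = ‖x‖)

universe w in
instance RCLike.small {𝕜 : Type*} [RCLike 𝕜] : Small.{w} 𝕜 :=
  small_of_injective (f := fun z : 𝕜 => (RCLike.re z, RCLike.im z))
    fun _ _ h => RCLike.ext (congrArg Prod.fst h) (congrArg Prod.snd h)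

theorem Seminorm.exists_shrink_dual_vector {𝕜 M : Type*} [RCLike 𝕜] [AddCommGroup M]
    [Module 𝕜 M] (p : Seminorm 𝕜 M) (x : M) :
    ∃ g : M →ₗ[𝕜] Shrink.{u} 𝕜, 1 ∈ LinearMap.opNormBounds p g ∧ ‖g x‖ = p x := by
  obtain ⟨g, hg, hgx⟩ := p.exists_dual_vector x
  have norm_shrink (c : 𝕜) : ‖equivShrink.{u} 𝕜 c‖ = ‖c‖ :=
    congrArg norm ((equivShrink 𝕜).symm_apply_apply c)
  refine ⟨(Shrink.linearEquiv 𝕜 𝕜).symm.toLinearMap ∘ₗ g, ⟨zero_le_one, fun v => ?_⟩, ?_⟩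
  · simpa [norm_shrink] using hg v
  · simpa [norm_shrink] using hgx

section PropertyB

open LinearMap

variable {𝕜 M N : Type*} [RCLike 𝕜] [AddCommGroup M] [Module 𝕜 M] [AddCommGroup N] [Module 𝕜 N]
  {p : Seminorm 𝕜 M} {q : Seminorm 𝕜 N} {ρ : N ≃ₗ[𝕜] M}

def HasPropertyB (p : Seminorm 𝕜 M) (q : Seminorm 𝕜 N) (ρ : N ≃ₗ[𝕜] M) : Prop :=
  ∀ (F : Type u) [NormedAddCommGroup F] [NormedSpace 𝕜 F] (f : M →ₗ[𝕜] F),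
    ((opNormBounds q (f ∘ₗ ρ.toLinearMap)).Nonempty ↔ (opNormBounds p f).Nonempty) ∧
      ((opNormBounds q (f ∘ₗ ρ.toLinearMap)).Nonempty →
        sInf (opNormBounds q (f ∘ₗ ρ.toLinearMap)) = sInf (opNormBounds p f))

theorem hasPropertyB_of_apply_eq (h : ∀ z, p (ρ z) = q z) : HasPropertyB p q ρ :=
  fun _ _ _ f => by
    rw [opNormBounds_comp_of_apply_eq h]
    exact ⟨Iff.rfl, fun _ => rfl⟩

theorem HasPropertyB.apply_le (hB : HasPropertyB.{u} p q ρ) (z : N) : p (ρ z) ≤ q z := by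
  obtain ⟨g, hg, hgz⟩ := p.exists_shrink_dual_vector.{u} (ρ z)
  obtain ⟨hne, heq⟩ := hB _ g
  have hne' := hne.2 ⟨1, hg⟩
  rw [← hgz]
  exact norm_le_of_sInf_opNormBounds_eq hg hne' (heq hne') z

theorem HasPropertyB.le_apply (hB : HasPropertyB.{u} p q ρ) (z : N) : q z ≤ p (ρ z) := by
  obtain ⟨g, hg, hgz⟩ := q.exists_shrink_dual_vector.{u} z
  have hg_comp : (g ∘ₗ ρ.symm.toLinearMap) ∘ₗ ρ.toLinearMap = g := by ext; simp
  obtain ⟨hne, heq⟩ := hB _ (g ∘ₗ ρ.symm.toLinearMap)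
  rw [hg_comp] at hne heq
  rw [← hgz, show g z = (g ∘ₗ ρ.symm.toLinearMap) (ρ z) by simp]
  exact norm_le_of_sInf_opNormBounds_eq hg (hne.1 ⟨1, hg⟩) (heq ⟨1, hg⟩).symm (ρ z)

theorem apply_eq_iff_hasPropertyB : (∀ z, p (ρ z) = q z) ↔ HasPropertyB.{u} p q ρ :=
  ⟨hasPropertyB_of_apply_eq, fun hB z => (hB.apply_le z).antisymm (hB.le_apply z)⟩

end PropertyB

section Linearization

variable {𝕜 : Type*} [RCLike 𝕜] {n : ℕ} {E : Fin n → Type*}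
    [∀ i, NormedAddCommGroup (E i)] [∀ i, NormedSpace 𝕜 (E i)]
    {F : Type u} [NormedAddCommGroup F] [NormedSpace 𝕜 F]

theorem linearizationFull_eq_comp (A : MultilinearMap 𝕜 E (𝕜 →ₗ[𝕜] F)) :
    linearizationFull A =
      PiTensorProduct.lift (Aone A) ∘ₗ (TensorProduct.rid 𝕜 (⨂[𝕜] i, E i)).toLinearMap := by
  ext x
  simp [linearizationFull, Aone]

theorem lift_Aone_surjective :
    Function.Surjective fun A : MultilinearMap 𝕜 E (𝕜 →ₗ[𝕜] F) => PiTensorProduct.lift (Aone A) :=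
  fun f => ⟨(LinearMap.ringLmapEquivSelf 𝕜 𝕜 F).symm.toLinearMap.compMultilinearMap
    (PiTensorProduct.lift.symm f), by ext; simp [Aone]⟩

end Linearization

theorem smooth_iff_propertyB_general {𝕜 : Type*} [RCLike 𝕜] {n : ℕ}
    (E : Fin n → Type*) [∀ i, NormedAddCommGroup (E i)] [∀ i, NormedSpace 𝕜 (E i)]
    (βn : (⨂[𝕜] i, E i) → ℝ) (βn1 : ((⨂[𝕜] i, E i) ⊗[𝕜] 𝕜) → ℝ)
    (hβn_smul : ∀ (c : 𝕜) u, βn (c • u) = ‖c‖ * βn u)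
    (hβn_add : ∀ u v, βn (u + v) ≤ βn u + βn v)
    (hβn1_smul : ∀ (c : 𝕜) z, βn1 (c • z) = ‖c‖ * βn1 z)
    (hβn1_add : ∀ z w, βn1 (z + w) ≤ βn1 z + βn1 w) :
    (∀ z, βn (TensorProduct.rid 𝕜 (⨂[𝕜] i, E i) z) = βn1 z) ↔
      (∀ (F : Type u) (_ : NormedAddCommGroup F) (_ : NormedSpace 𝕜 F)
        (A : MultilinearMap 𝕜 E (𝕜 →ₗ[𝕜] F)),
        ((∃ C, 0 ≤ C ∧ ∀ z, ‖linearizationFull A z‖ ≤ C * βn1 z) ↔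
          (∃ C, 0 ≤ C ∧ ∀ u, ‖PiTensorProduct.lift (Aone A) u‖ ≤ C * βn u)) ∧
        ((∃ C, 0 ≤ C ∧ ∀ z, ‖linearizationFull A z‖ ≤ C * βn1 z) →
          sInf {C | 0 ≤ C ∧ ∀ z, ‖linearizationFull A z‖ ≤ C * βn1 z}
            = sInf {C | 0 ≤ C ∧ ∀ u, ‖PiTensorProduct.lift (Aone A) u‖ ≤ C * βn u})) := by
  refine (apply_eq_iff_hasPropertyB (p := Seminorm.of βn hβn_add hβn_smul)
    (q := Seminorm.of βn1 hβn1_add hβn1_smul)).trans ⟨fun hB F _ _ A => ?_, fun h F _ _ f => ?_⟩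
  · rw [linearizationFull_eq_comp]
    exact hB F (PiTensorProduct.lift (Aone A))
  · obtain ⟨A, rfl⟩ := lift_Aone_surjective f
    have hA := h F _ _ A
    rw [linearizationFull_eq_comp] at hA
    exact hA

/-- A tensor norm is smooth at level `n` if and only if the corresponding ideal
`L_β` has property [B] at level `n`: the canonical bijection
`ψ : (E₁ ⊗ ⋯ ⊗ Eₙ ⊗ 𝕜, β_{n+1}) → (E₁ ⊗ ⋯ ⊗ Eₙ, β_n)` is an isometric isomorphism
iff for every normed space `F` and every `(n+1)`-linear `A : E₁ × ⋯ × Eₙ × 𝕜 → F`,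
`A_L` is `β_{n+1}`-bounded iff `(A1)_L` is `β_n`-bounded, with equal operator norms. -/
theorem smooth_iff_propertyB {𝕜 : Type*} [RCLike 𝕜] {n : ℕ} (hn : 1 ≤ n)
    (E : Fin n → Type*) [∀ i, NormedAddCommGroup (E i)] [∀ i, NormedSpace 𝕜 (E i)]
    (βn : (⨂[𝕜] i, E i) → ℝ) (βn1 : ((⨂[𝕜] i, E i) ⊗[𝕜] 𝕜) → ℝ)
    (hβn_def : ∀ u, βn u = 0 ↔ u = 0)
    (hβn_smul : ∀ (c : 𝕜) u, βn (c • u) = ‖c‖ * βn u)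
    (hβn_add : ∀ u v, βn (u + v) ≤ βn u + βn v)
    (hβn1_def : ∀ z, βn1 z = 0 ↔ z = 0)
    (hβn1_smul : ∀ (c : 𝕜) z, βn1 (c • z) = ‖c‖ * βn1 z)
    (hβn1_add : ∀ z w, βn1 (z + w) ≤ βn1 z + βn1 w) :
    (∀ z, βn (TensorProduct.rid 𝕜 (⨂[𝕜] i, E i) z) = βn1 z) ↔
      (∀ (F : Type u) (_ : NormedAddCommGroup F) (_ : NormedSpace 𝕜 F)
        (A : MultilinearMap 𝕜 E (𝕜 →ₗ[𝕜] F)),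
        ((∃ C, 0 ≤ C ∧ ∀ z, ‖linearizationFull A z‖ ≤ C * βn1 z) ↔
          (∃ C, 0 ≤ C ∧ ∀ u, ‖PiTensorProduct.lift (Aone A) u‖ ≤ C * βn u)) ∧
        ((∃ C, 0 ≤ C ∧ ∀ z, ‖linearizationFull A z‖ ≤ C * βn1 z) →
          sInf {C | 0 ≤ C ∧ ∀ z, ‖linearizationFull A z‖ ≤ C * βn1 z}
            = sInf {C | 0 ≤ C ∧ ∀ u, ‖PiTensorProduct.lift (Aone A) u‖ ≤ C * βn u})) :=
  smooth_iff_propertyB_general E βn βn1 hβn_smul hβn_add hβn1_smul hβn1_add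
end

section
/- Let p ≥ 1 and let E₁,…,Eₙ be normed spaces over 𝕂. Then σ_p is a seminorm on E₁⊗⋯⊗Eₙ: σ_p(λu) = |λ|·σ_p(u) for all λ ∈ 𝕂 and σ_p(u+v) ≤ σ_p(u) + σ_p(v) for all u, v ∈ E₁⊗⋯⊗Eₙ. -/
/-!
Scaling the coefficients of a representation of `u` by `c` gives one of `c • u` with cost
multiplied by `‖c‖`, so `σ_p (c • u) ≤ ‖c‖ σ_p u`; applied to `c⁻¹` this gives equality.

For the triangle inequality, concatenate representations of `u` and `v`: the sup term is
subadditive and the `q`-th power of the `ℓ_q` norm is additive. The representations must first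
be balanced. Moving a scalar `t > 0` from the first tensor factor into the coefficients multiplies
`‖λ‖_q` by `t` and the sup term by `t⁻ᵖ`, so a representation of cost `< s` can be brought to
`‖λ‖_q ≤ s ^ (1/q)` and sup term `≤ s`. Two such representations, for `s` and `s'`, concatenate to
one of cost at most `(s + s') ^ (1/q) (s + s') ^ (1/p) = s + s'`.
-/

open scoped TensorProduct
open PiTensorProduct

/-- The `ℓ_q` norm of a finite family of scalars, where `q` is the conjugate exponent
of `p` (`1/p + 1/q = 1`, with `q = ∞`, i.e. the sup norm, when `p = 1`). -/
noncomputable def lqNorm {𝕜 : Type*} [RCLike 𝕜] (p : ℝ) {m : ℕ} (lam : Fin m → 𝕜) : ℝ :=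
  if p = 1 then ⨆ j, ‖lam j‖ else (∑ j, ‖lam j‖ ^ (p / (p - 1))) ^ ((p - 1) / p)

/-- `sup_{‖φ_l‖ ≤ 1} Σ_j |φ₁(x_{1,j}) ⋯ φₙ(x_{n,j})|^p`. -/
noncomputable def supTerm (𝕜 : Type*) [RCLike 𝕜] {n : ℕ} {E : Fin n → Type*}
    [∀ i, NormedAddCommGroup (E i)] [∀ i, NormedSpace 𝕜 (E i)]
    (p : ℝ) {m : ℕ} (x : Fin m → Π i, E i) : ℝ :=
  ⨆ φ : {φ : Π i, E i →L[𝕜] 𝕜 // ∀ i, ‖φ i‖ ≤ 1},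
    ∑ j, (∏ i, ‖φ.1 i (x j i)‖) ^ p

/-- The tensor norm `σ_p` on `E₁ ⊗ ⋯ ⊗ Eₙ`. -/
noncomputable def sigmaNorm {𝕜 : Type*} [RCLike 𝕜] {n : ℕ} {E : Fin n → Type*}
    [∀ i, NormedAddCommGroup (E i)] [∀ i, NormedSpace 𝕜 (E i)]
    (p : ℝ) (u : ⨂[𝕜] i, E i) : ℝ :=
  sInf { r : ℝ | ∃ (m : ℕ) (lam : Fin m → 𝕜) (x : Fin m → Π i, E i),
    u = (∑ j, lam j • ⨂ₜ[𝕜] i, x j i) ∧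
    r = lqNorm p lam * (supTerm 𝕜 p x) ^ (1/p) }

lemma rpow_sub_one_div_mul_rpow_one_div {s p : ℝ} (hs : 0 ≤ s) (hp : p ≠ 0) :
    s ^ ((p - 1) / p) * s ^ (1 / p) = s := by
  have hsplit : (p - 1) / p + 1 / p = 1 := by rw [← add_div, sub_add_cancel, div_self hp]
  rw [← Real.rpow_add' hs (by rw [hsplit]; exact one_ne_zero), hsplit, Real.rpow_one]

lemma exists_pos_mul_le_and_inv_rpow_mul_le {p a T s : ℝ} (hp : 0 < p) (ha : 0 ≤ a)
    (hT : 0 ≤ T) (h : a * T ^ (1 / p) < s) :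
    ∃ t > 0, t * a ≤ s ^ ((p - 1) / p) ∧ t⁻¹ ^ p * T ≤ s := by
  set b := T ^ (1 / p) with hb_def
  have hb : 0 ≤ b := by positivity
  have hs : 0 < s := (mul_nonneg ha hb).trans_lt h
  suffices ∃ t > 0, t * a ≤ s ^ ((p - 1) / p) ∧ b ≤ t * s ^ (1 / p) by
    obtain ⟨t, ht, hta, hbt⟩ := this
    refine ⟨t, ht, hta, ?_⟩
    calc t⁻¹ ^ p * T = (t⁻¹ * b) ^ p := by
          rw [Real.mul_rpow (by positivity) hb, hb_def, one_div, Real.rpow_inv_rpow hT hp.ne']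
      _ ≤ (s ^ (1 / p)) ^ p :=
          Real.rpow_le_rpow (by positivity) (by rwa [inv_mul_le_iff₀ ht]) hp.le
      _ = s := by rw [one_div, Real.rpow_inv_rpow hs.le hp.ne']
  rcases ha.eq_or_lt with rfl | ha
  · refine ⟨(b + 1) / s ^ (1 / p), by positivity, by rw [mul_zero]; positivity, ?_⟩
    rw [div_mul_cancel₀ _ (by positivity)]
    linarith
  · refine ⟨s ^ ((p - 1) / p) / a, by positivity, (div_mul_cancel₀ _ ha.ne').le, ?_⟩
    rw [div_mul_eq_mul_div, rpow_sub_one_div_mul_rpow_one_div hs.le hp.ne', le_div_iff₀ ha,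
      mul_comm]
    exact h.le

section LqNorm

variable {𝕜 : Type*} [RCLike 𝕜] {p : ℝ} {m : ℕ}

lemma lqNorm_nonneg (p : ℝ) (lam : Fin m → 𝕜) : 0 ≤ lqNorm p lam := by
  unfold lqNorm
  split_ifs
  · exact Real.iSup_nonneg fun j => norm_nonneg _
  · exact Real.rpow_nonneg (Finset.sum_nonneg fun j _ => Real.rpow_nonneg (norm_nonneg _) _) _

lemma lqNorm_smul (hp : p ≠ 0) (c : 𝕜) (lam : Fin m → 𝕜) :
    lqNorm p (fun j => c * lam j) = ‖c‖ * lqNorm p lam := by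
  unfold lqNorm
  split_ifs with hp1
  · rw [Real.mul_iSup_of_nonneg (norm_nonneg c)]
    simp only [norm_mul]
  · have hq : p / (p - 1) * ((p - 1) / p) = 1 := by
      field_simp [sub_ne_zero.mpr hp1]
    simp only [norm_mul, Real.mul_rpow (norm_nonneg c) (norm_nonneg _), ← Finset.mul_sum]
    rw [Real.mul_rpow (by positivity) (Finset.sum_nonneg fun j _ => by positivity),
      ← Real.rpow_mul (norm_nonneg c), hq, Real.rpow_one]

/-- For `p = 1` the exponent `(p - 1) / p` vanishes and all three bounds are by `1`. -/
lemma lqNorm_append_le (hp : 1 ≤ p) {m' : ℕ} {a : Fin m → 𝕜} {b : Fin m' → 𝕜} {s s' : ℝ}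
    (hs : 0 ≤ s) (hs' : 0 ≤ s') (ha : lqNorm p a ≤ s ^ ((p - 1) / p))
    (hb : lqNorm p b ≤ s' ^ ((p - 1) / p)) :
    lqNorm p (Fin.append a b) ≤ (s + s') ^ ((p - 1) / p) := by
  rcases hp.eq_or_lt with rfl | hp1
  · simp only [sub_self, zero_div, Real.rpow_zero, lqNorm, if_true] at ha hb ⊢
    have hfin : ∀ {k} (c : Fin k → 𝕜) j, ‖c j‖ ≤ ⨆ j, ‖c j‖ := fun c j =>
      le_ciSup (f := fun j => ‖c j‖) (Set.finite_range _).bddAbove j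
    refine Real.iSup_le (fun j => Fin.addCases (fun j => ?_) (fun j => ?_) j) zero_le_one
    · simpa only [Fin.append_left] using (hfin a j).trans ha
    · simpa only [Fin.append_right] using (hfin b j).trans hb
  · have he : 0 < (p - 1) / p := div_pos (by linarith) (by linarith)
    have hsum : ∀ {k} (c : Fin k → 𝕜), 0 ≤ ∑ j, ‖c j‖ ^ (p / (p - 1)) := fun c =>
      Finset.sum_nonneg fun j _ => by positivity
    simp only [lqNorm, hp1.ne', if_false] at ha hb ⊢
    rw [Real.rpow_le_rpow_iff (hsum a) hs he] at ha
    rw [Real.rpow_le_rpow_iff (hsum b) hs' he] at hb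
    rw [Real.rpow_le_rpow_iff (hsum _) (add_nonneg hs hs') he, Fin.sum_univ_add]
    simpa only [Fin.append_left, Fin.append_right] using add_le_add ha hb

end LqNorm

section SupTerm

variable {𝕜 : Type*} [RCLike 𝕜] {n : ℕ} {E : Fin n → Type*}
  [∀ i, NormedAddCommGroup (E i)] [∀ i, NormedSpace 𝕜 (E i)] {p : ℝ} {m : ℕ}

lemma supTerm_nonneg (p : ℝ) (x : Fin m → Π i, E i) : 0 ≤ supTerm 𝕜 p x :=
  Real.iSup_nonneg fun _ => Finset.sum_nonneg fun _ _ => by positivity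

lemma sum_le_supTerm (hp : 0 ≤ p) (x : Fin m → Π i, E i)
    (φ : {φ : Π i, E i →L[𝕜] 𝕜 // ∀ i, ‖φ i‖ ≤ 1}) :
    ∑ j, (∏ i, ‖φ.1 i (x j i)‖) ^ p ≤ supTerm 𝕜 p x := by
  refine le_ciSup (f := fun ψ : {φ : Π i, E i →L[𝕜] 𝕜 // ∀ i, ‖φ i‖ ≤ 1} =>
    ∑ j, (∏ i, ‖ψ.1 i (x j i)‖) ^ p) ⟨∑ j, (∏ i, ‖x j i‖) ^ p, ?_⟩ φ
  rintro _ ⟨ψ, rfl⟩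
  refine Finset.sum_le_sum fun j _ => Real.rpow_le_rpow (by positivity) ?_ hp
  refine Finset.prod_le_prod (fun i _ => norm_nonneg _) fun i _ => ?_
  exact (ψ.1 i).le_of_opNorm_le (ψ.2 i) _ |>.trans_eq (one_mul _)

lemma supTerm_append_le (hp : 0 ≤ p) {m' : ℕ} (x : Fin m → Π i, E i) (y : Fin m' → Π i, E i) :
    supTerm 𝕜 p (Fin.append x y) ≤ supTerm 𝕜 p x + supTerm 𝕜 p y := by
  refine Real.iSup_le (fun φ => ?_) (add_nonneg (supTerm_nonneg p x) (supTerm_nonneg p y))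
  simp only [Fin.sum_univ_add, Fin.append_left, Fin.append_right]
  exact add_le_add (sum_le_supTerm hp x φ) (sum_le_supTerm hp y φ)

lemma prod_norm_update_smul (φ : Π i, E i →L[𝕜] 𝕜) (x : Π i, E i) (i₀ : Fin n) (c : 𝕜) :
    ∏ i, ‖φ i (Function.update x i₀ (c • x i₀) i)‖ = ‖c‖ * ∏ i, ‖φ i (x i)‖ := by
  rw [Fintype.prod_eq_mul_prod_compl i₀, Fintype.prod_eq_mul_prod_compl i₀ (fun i => ‖φ i (x i)‖),
    Function.update_self, map_smul, norm_smul, mul_assoc]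
  congr 2
  refine Finset.prod_congr rfl fun i hi => ?_
  rw [Function.update_of_ne (by simpa using hi)]

lemma supTerm_update_smul (i₀ : Fin n) (c : 𝕜) (x : Fin m → Π i, E i) :
    supTerm 𝕜 p (fun j => Function.update (x j) i₀ (c • x j i₀)) = ‖c‖ ^ p * supTerm 𝕜 p x := by
  simp only [supTerm, prod_norm_update_smul, Real.mul_rpow (norm_nonneg c)
    (Finset.prod_nonneg fun _ _ => norm_nonneg _), ← Finset.mul_sum]
  exact (Real.mul_iSup_of_nonneg (by positivity) _).symm

end SupTerm

section Representations

variable {𝕜 : Type*} [RCLike 𝕜] {n : ℕ} {E : Fin n → Type*}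
  [∀ i, NormedAddCommGroup (E i)] [∀ i, NormedSpace 𝕜 (E i)] {p : ℝ} {m : ℕ}

def reprCosts (p : ℝ) (u : ⨂[𝕜] i, E i) : Set ℝ :=
  { r : ℝ | ∃ (m : ℕ) (lam : Fin m → 𝕜) (x : Fin m → Π i, E i),
    u = (∑ j, lam j • ⨂ₜ[𝕜] i, x j i) ∧
    r = lqNorm p lam * (supTerm 𝕜 p x) ^ (1/p) }

lemma sigmaNorm_eq_sInf_reprCosts (u : ⨂[𝕜] i, E i) : sigmaNorm p u = sInf (reprCosts p u) :=
  rfl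

lemma sum_append_smul_tprod {m' : ℕ} (lam : Fin m → 𝕜) (mu : Fin m' → 𝕜)
    (x : Fin m → Π i, E i) (y : Fin m' → Π i, E i) :
    (∑ j, Fin.append lam mu j • ⨂ₜ[𝕜] i, Fin.append x y j i)
      = (∑ j, lam j • ⨂ₜ[𝕜] i, x j i) + ∑ j, mu j • ⨂ₜ[𝕜] i, y j i := by
  simp only [Fin.sum_univ_add, Fin.append_left, Fin.append_right]

lemma tprod_update_smul (x : Π i, E i) (i₀ : Fin n) (c : 𝕜) :
    (⨂ₜ[𝕜] i, Function.update x i₀ (c • x i₀) i) = c • ⨂ₜ[𝕜] i, x i := by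
  simpa only [Function.update_eq_self] using
    MultilinearMap.map_update_smul (tprod 𝕜) x i₀ c (x i₀)

lemma reprCosts_nonempty (p : ℝ) (u : ⨂[𝕜] i, E i) : (reprCosts p u).Nonempty := by
  suffices ∃ (m : ℕ) (lam : Fin m → 𝕜) (x : Fin m → Π i, E i),
      u = ∑ j, lam j • ⨂ₜ[𝕜] i, x j i by
    obtain ⟨m, lam, x, hu⟩ := this
    exact ⟨_, m, lam, x, hu, rfl⟩
  induction u using PiTensorProduct.induction_on with
  | smul_tprod r f => exact ⟨1, fun _ => r, fun _ => f, by simp⟩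
  | add u v hu hv =>
    obtain ⟨m, lam, x, rfl⟩ := hu
    obtain ⟨m', mu, y, rfl⟩ := hv
    exact ⟨m + m', Fin.append lam mu, Fin.append x y, (sum_append_smul_tprod lam mu x y).symm⟩

lemma nonneg_of_mem_reprCosts {u : ⨂[𝕜] i, E i} {r : ℝ} (hr : r ∈ reprCosts p u) : 0 ≤ r := by
  obtain ⟨m, lam, x, -, rfl⟩ := hr
  exact mul_nonneg (lqNorm_nonneg p lam) (Real.rpow_nonneg (supTerm_nonneg p x) _)

lemma bddBelow_reprCosts (p : ℝ) (u : ⨂[𝕜] i, E i) : BddBelow (reprCosts p u) :=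
  ⟨0, fun _ => nonneg_of_mem_reprCosts⟩

lemma sigmaNorm_nonneg (p : ℝ) (u : ⨂[𝕜] i, E i) : 0 ≤ sigmaNorm p u :=
  Real.sInf_nonneg fun _ => nonneg_of_mem_reprCosts

lemma sigmaNorm_le_of_eq_sum {u : ⨂[𝕜] i, E i} {lam : Fin m → 𝕜} {x : Fin m → Π i, E i}
    (hu : u = ∑ j, lam j • ⨂ₜ[𝕜] i, x j i) :
    sigmaNorm p u ≤ lqNorm p lam * supTerm 𝕜 p x ^ (1 / p) :=
  csInf_le (bddBelow_reprCosts p u) ⟨m, lam, x, hu, rfl⟩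

lemma smul_mem_reprCosts (hp : p ≠ 0) (c : 𝕜) {u : ⨂[𝕜] i, E i} {r : ℝ}
    (hr : r ∈ reprCosts p u) : ‖c‖ * r ∈ reprCosts p (c • u) := by
  obtain ⟨m, lam, x, rfl, rfl⟩ := hr
  refine ⟨m, fun j => c * lam j, x, ?_, by rw [lqNorm_smul hp, mul_assoc]⟩
  simp only [Finset.smul_sum, smul_smul]

lemma sigmaNorm_smul_le (hp : p ≠ 0) (c : 𝕜) (u : ⨂[𝕜] i, E i) :
    sigmaNorm p (c • u) ≤ ‖c‖ * sigmaNorm p u := by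
  rw [sigmaNorm_eq_sInf_reprCosts, sigmaNorm_eq_sInf_reprCosts, ← smul_eq_mul,
    ← Real.sInf_smul_of_nonneg (norm_nonneg c)]
  refine csInf_le_csInf (bddBelow_reprCosts p _) ((reprCosts_nonempty p u).smul_set) ?_
  rintro _ ⟨r, hr, rfl⟩
  exact smul_mem_reprCosts hp c hr

lemma exists_balanced_repr (hn : 1 ≤ n) (hp : 0 < p) {u : ⨂[𝕜] i, E i} {lam : Fin m → 𝕜}
    {x : Fin m → Π i, E i} (hu : u = ∑ j, lam j • ⨂ₜ[𝕜] i, x j i) {s : ℝ}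
    (hs : lqNorm p lam * supTerm 𝕜 p x ^ (1 / p) < s) :
    ∃ (lam' : Fin m → 𝕜) (x' : Fin m → Π i, E i), u = (∑ j, lam' j • ⨂ₜ[𝕜] i, x' j i) ∧
      lqNorm p lam' ≤ s ^ ((p - 1) / p) ∧ supTerm 𝕜 p x' ≤ s := by
  obtain ⟨t, ht, hlam, hx⟩ := exists_pos_mul_le_and_inv_rpow_mul_le hp
    (lqNorm_nonneg p lam) (supTerm_nonneg p x) hs
  let i₀ : Fin n := ⟨0, hn⟩
  have ht' : (t : 𝕜) ≠ 0 := RCLike.ofReal_ne_zero.mpr ht.ne'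
  refine ⟨fun j => t * lam j, fun j => Function.update (x j) i₀ ((t : 𝕜)⁻¹ • x j i₀), ?_, ?_, ?_⟩
  · simp only [hu, tprod_update_smul, smul_smul, mul_right_comm _ _ (t : 𝕜)⁻¹,
      mul_inv_cancel₀ ht', one_mul]
  · rwa [lqNorm_smul hp.ne', RCLike.norm_ofReal, abs_of_pos ht]
  · rwa [supTerm_update_smul, norm_inv, RCLike.norm_ofReal, abs_of_pos ht]

end Representations

section Seminorm

variable {𝕜 : Type*} [RCLike 𝕜] {n : ℕ} {E : Fin n → Type*}
  [∀ i, NormedAddCommGroup (E i)] [∀ i, NormedSpace 𝕜 (E i)] {p : ℝ}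

lemma sigmaNorm_zero (hp : p ≠ 0) : sigmaNorm p (0 : ⨂[𝕜] i, E i) = 0 :=
  le_antisymm (by simpa using sigmaNorm_smul_le hp (0 : 𝕜) (0 : ⨂[𝕜] i, E i))
    (sigmaNorm_nonneg p 0)

lemma sigmaNorm_add_le_of_balanced (hp : 1 ≤ p) {m m' : ℕ} {u v : ⨂[𝕜] i, E i}
    {lam : Fin m → 𝕜} {x : Fin m → Π i, E i} {mu : Fin m' → 𝕜} {y : Fin m' → Π i, E i}
    (hu : u = ∑ j, lam j • ⨂ₜ[𝕜] i, x j i) (hv : v = ∑ j, mu j • ⨂ₜ[𝕜] i, y j i) {s s' : ℝ}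
    (hlam : lqNorm p lam ≤ s ^ ((p - 1) / p)) (hx : supTerm 𝕜 p x ≤ s)
    (hmu : lqNorm p mu ≤ s' ^ ((p - 1) / p)) (hy : supTerm 𝕜 p y ≤ s') :
    sigmaNorm p (u + v) ≤ s + s' := by
  have hp₀ : 0 < p := by linarith
  have hs : 0 ≤ s := (supTerm_nonneg p x).trans hx
  have hs' : 0 ≤ s' := (supTerm_nonneg p y).trans hy
  calc sigmaNorm p (u + v)
      ≤ lqNorm p (Fin.append lam mu) * supTerm 𝕜 p (Fin.append x y) ^ (1 / p) :=
        sigmaNorm_le_of_eq_sum (by rw [sum_append_smul_tprod, hu, hv])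
    _ ≤ (s + s') ^ ((p - 1) / p) * (s + s') ^ (1 / p) := by
        refine mul_le_mul (lqNorm_append_le hp hs hs' hlam hmu) ?_
          (Real.rpow_nonneg (supTerm_nonneg p _) _) (by positivity)
        exact Real.rpow_le_rpow (supTerm_nonneg p _)
          ((supTerm_append_le hp₀.le x y).trans (add_le_add hx hy)) (by positivity)
    _ = s + s' := rpow_sub_one_div_mul_rpow_one_div (add_nonneg hs hs') hp₀.ne'

lemma sigmaNorm_add_le_of_mem (hn : 1 ≤ n) (hp : 1 ≤ p) {u v : ⨂[𝕜] i, E i} {r r' : ℝ}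
    (hr : r ∈ reprCosts p u) (hr' : r' ∈ reprCosts p v) : sigmaNorm p (u + v) ≤ r + r' := by
  obtain ⟨m, lam, x, hu, rfl⟩ := hr
  obtain ⟨m', mu, y, hv, rfl⟩ := hr'
  refine le_of_forall_pos_le_add fun ε hε => ?_
  have hp₀ : 0 < p := by linarith
  obtain ⟨lam', x', hu', hlam, hx⟩ :=
    exists_balanced_repr hn hp₀ hu (lt_add_of_pos_right _ (half_pos hε))
  obtain ⟨mu', y', hv', hmu, hy⟩ :=
    exists_balanced_repr hn hp₀ hv (lt_add_of_pos_right _ (half_pos hε))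
  exact (sigmaNorm_add_le_of_balanced hp hu' hv' hlam hx hmu hy).trans_eq (by ring)

lemma sigmaNorm_add_le (hn : 1 ≤ n) (hp : 1 ≤ p) (u v : ⨂[𝕜] i, E i) :
    sigmaNorm p (u + v) ≤ sigmaNorm p u + sigmaNorm p v := by
  rw [sigmaNorm_eq_sInf_reprCosts u, sigmaNorm_eq_sInf_reprCosts v,
    ← csInf_add (reprCosts_nonempty p u) (bddBelow_reprCosts p u) (reprCosts_nonempty p v)
      (bddBelow_reprCosts p v)]
  refine le_csInf ((reprCosts_nonempty p u).add (reprCosts_nonempty p v)) ?_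
  rintro _ ⟨r, hr, r', hr', rfl⟩
  exact sigmaNorm_add_le_of_mem hn hp hr hr'

variable (E) in
noncomputable def sigmaSeminorm (hn : 1 ≤ n) (hp : 1 ≤ p) : Seminorm 𝕜 (⨂[𝕜] i, E i) :=
  Seminorm.ofSMulLE (sigmaNorm p) (sigmaNorm_zero (by linarith)) (sigmaNorm_add_le hn hp)
    (sigmaNorm_smul_le (by linarith))

end Seminorm

/-- `σ_p` is absolutely homogeneous and satisfies the triangle inequality, i.e. it is a
seminorm on `E₁ ⊗ ⋯ ⊗ Eₙ`. -/
theorem sigmaNorm_seminorm {𝕜 : Type*} [RCLike 𝕜] {n : ℕ} (hn : 1 ≤ n)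
    (E : Fin n → Type*) [∀ i, NormedAddCommGroup (E i)] [∀ i, NormedSpace 𝕜 (E i)]
    (p : ℝ) (hp : 1 ≤ p) :
    (∀ (c : 𝕜) (u : ⨂[𝕜] i, E i), sigmaNorm p (c • u) = ‖c‖ * sigmaNorm p u) ∧
    (∀ u v : ⨂[𝕜] i, E i, sigmaNorm p (u + v) ≤ sigmaNorm p u + sigmaNorm p v) :=
  ⟨map_smul_eq_mul (sigmaSeminorm E hn hp), map_add_le_add (sigmaSeminorm E hn hp)⟩
end

section
/- Let p ≥ 1 and let E₁,…,Eₙ be normed spaces over 𝕂. Then for every u ∈ E₁⊗⋯⊗Eₙ⊗𝕂, one has σ_p^{n+1}(u) = σ_p^n(ψ(u)); consequently the canonical map ψ : (E₁⊗⋯⊗Eₙ⊗𝕂, σ_p^{n+1}) → (E₁⊗⋯⊗Eₙ, σ_p^n) is an isometric isomorphism (the tensor norm σ_p is smooth). -/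
open scoped TensorProduct
open PiTensorProduct

/-- `sup Σ_j (|φ₁(x_{1,j}) ⋯ φₙ(x_{n,j})| · |φ_{n+1}(y_j)|)^p`, the sup being over
functionals in the unit balls of `E₁', …, Eₙ'` and of `𝕜'`. -/
noncomputable def supTerm' (𝕜 : Type*) [RCLike 𝕜] {n : ℕ} {E : Fin n → Type*}
    [∀ i, NormedAddCommGroup (E i)] [∀ i, NormedSpace 𝕜 (E i)]
    (p : ℝ) {m : ℕ} (x : Fin m → Π i, E i) (y : Fin m → 𝕜) : ℝ :=
  ⨆ Φ : {Φ : (Π i, E i →L[𝕜] 𝕜) × (𝕜 →L[𝕜] 𝕜) // (∀ i, ‖Φ.1 i‖ ≤ 1) ∧ ‖Φ.2‖ ≤ 1},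
    ∑ j, ((∏ i, ‖Φ.1.1 i (x j i)‖) * ‖Φ.1.2 (y j)‖) ^ p

/-- The tensor norm `σ_p^{n+1}` on `E₁ ⊗ ⋯ ⊗ Eₙ ⊗ 𝕜`, treating `𝕜` (with the absolute
value) as the `(n+1)`-st normed space. -/
noncomputable def sigmaNorm' {𝕜 : Type*} [RCLike 𝕜] {n : ℕ} {E : Fin n → Type*}
    [∀ i, NormedAddCommGroup (E i)] [∀ i, NormedSpace 𝕜 (E i)]
    (p : ℝ) (z : (⨂[𝕜] i, E i) ⊗[𝕜] 𝕜) : ℝ :=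
  sInf { r : ℝ | ∃ (m : ℕ) (lam : Fin m → 𝕜) (x : Fin m → Π i, E i) (y : Fin m → 𝕜),
    z = (∑ j, lam j • ((⨂ₜ[𝕜] i, x j i) ⊗ₜ[𝕜] y j)) ∧
    r = lqNorm p lam * (supTerm' 𝕜 p x y) ^ (1/p) }

/-!
Both infima run over the same set of values. A representation `Σ λ_j (x_j ⊗ y_j)` of `u` gives
the representation `Σ λ_j x'_j` of `ψ u`, where `x'_j` is `x_j` with one coordinate multiplied
by the scalar `y_j`; the multiplicativity of `|φ₁(·)⋯φₙ(·)|` along that coordinate, together with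
`|φ_{n+1}(y_j)| ≤ |y_j|` (attained at `φ_{n+1} = id`), makes the two suprema equal. Conversely a
representation of `ψ u` lifts with `y_j = 1`.
-/

open Function

lemma PiTensorProduct.tprod_update_smul {R ι : Type*} [CommSemiring R] [DecidableEq ι]
    {E : ι → Type*} [∀ i, AddCommMonoid (E i)] [∀ i, Module R (E i)]
    (v : Π i, E i) (i₀ : ι) (c : R) :
    (⨂ₜ[R] i, update v i₀ (c • v i₀) i) = c • ⨂ₜ[R] i, v i := by
  rw [MultilinearMap.map_update_smul, update_eq_self]

lemma prod_norm_apply_update_smul {𝕜 ι : Type*} [NormedField 𝕜] [Fintype ι] [DecidableEq ι]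
    {E : ι → Type*} [∀ i, SeminormedAddCommGroup (E i)] [∀ i, NormedSpace 𝕜 (E i)]
    (φ : Π i, E i →L[𝕜] 𝕜) (v : Π i, E i) (i₀ : ι) (c : 𝕜) :
    ∏ i, ‖φ i (update v i₀ (c • v i₀) i)‖ = ‖c‖ * ∏ i, ‖φ i (v i)‖ := by
  have key := ((MultilinearMap.mkPiAlgebra 𝕜 ι 𝕜).compLinearMap
    fun i => (φ i : E i →ₗ[𝕜] 𝕜)).map_update_smul v i₀ c (v i₀)
  simp only [update_eq_self, MultilinearMap.compLinearMap_apply,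
    MultilinearMap.mkPiAlgebra_apply, ContinuousLinearMap.coe_coe, smul_eq_mul] at key
  rw [← norm_prod, key, norm_mul, norm_prod]

lemma supTerm'_eq_supTerm_update {𝕜 : Type*} [RCLike 𝕜] {n : ℕ} {E : Fin n → Type*}
    [∀ i, NormedAddCommGroup (E i)] [∀ i, NormedSpace 𝕜 (E i)]
    {p : ℝ} (hp : 0 ≤ p) (i₀ : Fin n) {m : ℕ} (x : Fin m → Π i, E i) (y : Fin m → 𝕜) :
    supTerm' 𝕜 p x y = supTerm 𝕜 p (fun j => update (x j) i₀ (y j • x j i₀)) := by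
  apply csSup_eq_csSup_of_forall_exists_le
  · rintro _ ⟨Φ, rfl⟩
    refine ⟨_, ⟨⟨Φ.1.1, Φ.2.1⟩, rfl⟩, Finset.sum_le_sum fun j _ => ?_⟩
    rw [prod_norm_apply_update_smul, mul_comm]
    gcongr
    exact (Φ.1.2.le_of_opNorm_le Φ.2.2 (y j)).trans_eq (one_mul _)
  · rintro _ ⟨φ, rfl⟩
    refine ⟨_, ⟨⟨(φ.1, .id 𝕜 𝕜), φ.2, ContinuousLinearMap.norm_id_le⟩, rfl⟩, le_of_eq ?_⟩
    simp only [prod_norm_apply_update_smul, ContinuousLinearMap.id_apply, mul_comm]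

/-- The tensor norm `σ_p` is smooth: `σ_p^{n+1}(u) = σ_p^n(ψ(u))`, so the canonical map
`ψ : (E₁ ⊗ ⋯ ⊗ Eₙ ⊗ 𝕜, σ_p^{n+1}) → (E₁ ⊗ ⋯ ⊗ Eₙ, σ_p^n)` is an isometric
isomorphism. -/
theorem sigmaNorm_smooth {𝕜 : Type*} [RCLike 𝕜] {n : ℕ} (hn : 1 ≤ n)
    (E : Fin n → Type*) [∀ i, NormedAddCommGroup (E i)] [∀ i, NormedSpace 𝕜 (E i)]
    (p : ℝ) (hp : 1 ≤ p) (u : (⨂[𝕜] i, E i) ⊗[𝕜] 𝕜) :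
    sigmaNorm' p u = sigmaNorm p (TensorProduct.rid 𝕜 (⨂[𝕜] i, E i) u) := by
  have hp₀ : 0 ≤ p := zero_le_one.trans hp
  let i₀ : Fin n := ⟨0, hn⟩
  unfold sigmaNorm' sigmaNorm
  congr 1
  ext r
  constructor
  · rintro ⟨m, lam, x, y, rfl, rfl⟩
    refine ⟨m, lam, fun j => update (x j) i₀ (y j • x j i₀), ?_, ?_⟩
    · simp only [map_sum, map_smul, TensorProduct.rid_tmul, PiTensorProduct.tprod_update_smul]
    · rw [supTerm'_eq_supTerm_update hp₀ i₀]
  · rintro ⟨m, lam, x, hu, rfl⟩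
    refine ⟨m, lam, x, fun _ => 1, (TensorProduct.rid 𝕜 _).injective ?_, ?_⟩
    · simp only [hu, map_sum, map_smul, TensorProduct.rid_tmul, one_smul]
    · simp only [supTerm'_eq_supTerm_update hp₀ i₀, one_smul, update_eq_self]
end
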